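/- The essential image of φ : Glid FR → Prefrag FR is closed under subobjects: if M is an object of Glid FR and f : N → φ(M) is a monomorphism in Prefrag FR, then N lies in the essential image of φ. -/

import Mathlib

/-!
A monomorphism of prefragments is componentwise injective, because its kernel is again a
prefragment. Writing `M = Q M₀` for a preglider `M₀`, the monomorphism `f : N ⟶ j^* M₀` thus
identifies `N` with the subfunctor `α ↦ f_α(N α)` of `j^* M₀`. Extending this subfunctor by
`M₀(∞)` at `∞` gives a sub-preglider `E` of `M₀`, and `φ (Q E) = j^* E ≅ N`.
-/

set_option linter.unusedSectionVars false
set_option maxHeartbeats 1000000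
set_option synthInstance.maxHeartbeats 1000000
set_option maxHeartbeats 2000000

noncomputable section

open CategoryTheory CategoryTheory.Limits

universe u

namespace GliderPaper

/-- A `Γ`-filtration `FR` on a unital ring `R`: additive subgroups `F γ` with
`1 ∈ F 1`, monotone in `γ`, and multiplicative. -/
structure RingFiltration (Γ : Type u) [Group Γ] [PartialOrder Γ] (R : Type u) [Ring R] where
  F : Γ → AddSubgroup R
  one_mem : (1 : R) ∈ F 1
  mono : ∀ {α β : Γ}, α ≤ β → F α ≤ F β
  mul_mem : ∀ {α β : Γ} {a b : R}, a ∈ F α → b ∈ F β → a * b ∈ F (α * β)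

variable {Γ : Type u} [Group Γ] [PartialOrder Γ]
  [CovariantClass Γ Γ (· * ·) (· ≤ ·)] [CovariantClass Γ Γ (Function.swap (· * ·)) (· ≤ ·)]
  {R : Type u} [Ring R]

/-- Objects of the extended filtered companion category `oFF_Λ R`:
the disjoint union `Λ ⊔ {∞}`. -/
inductive OFF (FR : RingFiltration Γ R) (Λ : Set Γ) : Type u
  | of (α : Λ)
  | infty

/-- Objects of the filtered companion category `FF_Λ R`: the set `Λ`. -/
inductive FF (FR : RingFiltration Γ R) (Λ : Set Γ) : Type u
  | of (α : Λ)

variable (FR : RingFiltration Γ R) (Λ : Set Γ)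

namespace OFF

/-- `le X Y` holds iff the canonical morphism `1_{X,Y}` is defined, i.e. `X ≤ Y` in `Λ`,
or `Y = ∞`. -/
def le : OFF FR Λ → OFF FR Λ → Prop
  | of α, of β => (α : Γ) ≤ (β : Γ)
  | _, infty => True
  | infty, of _ => False

open scoped Classical in
/-- The additive subgroup of `R` of morphisms `X ⟶ Y` in `oFF_Λ R`:
`Hom(α,β) = F_{βα⁻¹}R` for `α ≤ β` in `Λ`, `Hom(X,∞) = R`, and `0` otherwise. -/
noncomputable def homGrp : OFF FR Λ → OFF FR Λ → AddSubgroup R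
  | of α, of β => if (α : Γ) ≤ (β : Γ) then FR.F ((β : Γ) * (α : Γ)⁻¹) else ⊥
  | _, infty => ⊤
  | infty, of _ => ⊥

theorem le_refl' : ∀ X : OFF FR Λ, le FR Λ X X
  | of _ => _root_.le_refl _
  | infty => trivial

theorem one_mem_homGrp : ∀ {X Y : OFF FR Λ}, le FR Λ X Y → (1 : R) ∈ homGrp FR Λ X Y
  | of α, of β, h => by
      have h' : (α : Γ) ≤ (β : Γ) := h
      have h1 : (1 : Γ) ≤ (β : Γ) * (α : Γ)⁻¹ := by
        rw [← mul_inv_cancel (α : Γ)]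
        exact mul_le_mul_left h' _
      simpa [homGrp, if_pos h'] using FR.mono h1 FR.one_mem
  | of _, infty, _ => trivial
  | infty, infty, _ => trivial
  | infty, of _, h => h.elim

theorem mul_mem_homGrp : ∀ {X Y Z : OFF FR Λ} {f g : R},
    f ∈ homGrp FR Λ X Y → g ∈ homGrp FR Λ Y Z → g * f ∈ homGrp FR Λ X Z := by
  intro X Y Z f g hf hg
  cases X <;> cases Y <;> cases Z <;> simp only [homGrp] at hf hg ⊢ <;> try trivial
  case of.of.of a b c =>
    by_cases hab : (a : Γ) ≤ (b : Γ)
    · by_cases hbc : (b : Γ) ≤ (c : Γ)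
      · rw [if_pos hab] at hf
        rw [if_pos hbc] at hg
        rw [if_pos (le_trans hab hbc)]
        have := FR.mul_mem hg hf
        rwa [show (c : Γ) * (b : Γ)⁻¹ * ((b : Γ) * (a : Γ)⁻¹) = (c : Γ) * (a : Γ)⁻¹ by
          group] at this
      · rw [if_neg hbc] at hg
        rw [AddSubgroup.mem_bot] at hg
        subst hg
        simp only [zero_mul]
        exact AddSubgroup.zero_mem _
    · rw [if_neg hab] at hf
      rw [AddSubgroup.mem_bot] at hf
      subst hf
      simp only [mul_zero]
      exact AddSubgroup.zero_mem _
  case of.infty.of a c =>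
    rw [AddSubgroup.mem_bot] at hg
    subst hg
    simp only [zero_mul]
    exact AddSubgroup.zero_mem _
  case infty.of.of b c =>
    rw [AddSubgroup.mem_bot] at hf
    subst hf
    simp only [mul_zero]
    exact AddSubgroup.zero_mem _
  case infty.infty.of c =>
    rw [AddSubgroup.mem_bot] at hg
    subst hg
    simp only [zero_mul]
    exact AddSubgroup.zero_mem _

instance : Category (OFF FR Λ) where
  Hom X Y := homGrp FR Λ X Y
  id X := ⟨1, one_mem_homGrp FR Λ (le_refl' FR Λ X)⟩
  comp f g := ⟨g.1 * f.1, mul_mem_homGrp FR Λ f.2 g.2⟩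
  id_comp f := Subtype.ext (mul_one f.1)
  comp_id f := Subtype.ext (one_mul f.1)
  assoc f g h := Subtype.ext (mul_assoc h.1 g.1 f.1).symm

instance : Preadditive (OFF FR Λ) where
  homGroup X Y := inferInstanceAs (AddCommGroup (homGrp FR Λ X Y))
  add_comp _ _ _ f f' g := Subtype.ext (mul_add g.1 f.1 f'.1)
  comp_add _ _ _ f g g' := Subtype.ext (add_mul g.1 g'.1 f.1)

end OFF

namespace FF

/-- The inclusion of the objects of `FF_Λ R` into those of `oFF_Λ R`. -/
def toOFF : FF FR Λ → OFF FR Λ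
  | of α => .of α

instance : Category (FF FR Λ) where
  Hom X Y := OFF.homGrp FR Λ (toOFF FR Λ X) (toOFF FR Λ Y)
  id X := ⟨1, OFF.one_mem_homGrp FR Λ (OFF.le_refl' FR Λ _)⟩
  comp f g := ⟨g.1 * f.1, OFF.mul_mem_homGrp FR Λ f.2 g.2⟩
  id_comp f := Subtype.ext (mul_one f.1)
  comp_id f := Subtype.ext (one_mul f.1)
  assoc f g h := Subtype.ext (mul_assoc h.1 g.1 f.1).symm

instance : Preadditive (FF FR Λ) where
  homGroup X Y := inferInstanceAs (AddCommGroup (OFF.homGrp FR Λ (toOFF FR Λ X) (toOFF FR Λ Y)))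
  add_comp _ _ _ f f' g := Subtype.ext (mul_add g.1 f.1 f'.1)
  comp_add _ _ _ f g g' := Subtype.ext (add_mul g.1 g'.1 f.1)

end FF

/-- The inclusion functor `j : FF_Λ R ⥤ oFF_Λ R`. -/
def jF : FF FR Λ ⥤ OFF FR Λ where
  obj := FF.toOFF FR Λ
  map f := f
  map_id _ := rfl
  map_comp _ _ := rfl

instance : (jF FR Λ).Additive := ⟨rfl⟩

/-- `Mod C`: the category of additive functors from `C` to abelian groups. -/
abbrev Mod (C : Type u) [Category.{u} C] [Preadditive C] : Type (u + 1) :=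
  C ⥤+ AddCommGrpCat.{u}

/-- The component at `X` of a morphism in `Mod C`. -/
def mapp {C : Type u} [Category.{u} C] [Preadditive C] {M N : Mod C} (f : M ⟶ N) (X : C) :
    M.obj.obj X ⟶ N.obj.obj X :=
  f.hom.app X

/-- The canonical morphism `1_{X,Y}` in `oFF_Λ R`, given by `1_R`. -/
def unitHom (X Y : OFF FR Λ) (h : OFF.le FR Λ X Y) : X ⟶ Y :=
  ⟨1, OFF.one_mem_homGrp FR Λ h⟩

/-- The canonical morphism `1_{α,β}` in `FF_Λ R`, given by `1_R`. -/
def unitHomFF (α β : Λ) (h : (α : Γ) ≤ (β : Γ)) : (FF.of α : FF FR Λ) ⟶ FF.of β :=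
  unitHom FR Λ (.of α) (.of β) h

/-- A module `M` over `oFF_Λ R` is a preglider if all the maps `M(1_{X,Y})` are injective. -/
def IsPreglider (M : Mod (OFF FR Λ)) : Prop :=
  ∀ (X Y : OFF FR Λ) (h : OFF.le FR Λ X Y), Function.Injective (M.obj.map (unitHom FR Λ X Y h))

/-- A module `M` over `FF_Λ R` is a prefragment if all the maps `M(1_{α,β})` are injective. -/
def IsPrefragment (M : Mod (FF FR Λ)) : Prop :=
  ∀ (α β : Λ) (h : (α : Γ) ≤ (β : Γ)), Function.Injective (M.obj.map (unitHomFF FR Λ α β h))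

/-- The category of pregliders: the full subcategory of `Mod (oFF_Λ R)` of pregliders. -/
abbrev Preglid : Type (u + 1) :=
  ObjectProperty.FullSubcategory (fun M : Mod (OFF FR Λ) => IsPreglider FR Λ M)

instance : Preadditive (Preglid FR Λ) := Preadditive.fullSubcategory _

/-- The category of prefragments: the full subcategory of `Mod (FF_Λ R)` of prefragments. -/
abbrev Prefrag : Type (u + 1) :=
  ObjectProperty.FullSubcategory (fun M : Mod (FF FR Λ) => IsPrefragment FR Λ M)

instance : Preadditive (Prefrag FR Λ) := Preadditive.fullSubcategory _

/-- The inclusion `Preglid FR Λ ⥤ Mod (oFF_Λ R)`. -/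
def iotaF : Preglid FR Λ ⥤ Mod (OFF FR Λ) := ObjectProperty.ι _

/-- The inclusion `Prefrag FR Λ ⥤ Mod (FF_Λ R)`. -/
def etaF : Prefrag FR Λ ⥤ Mod (FF FR Λ) := ObjectProperty.ι _

/-- The component at `X` of a morphism of pregliders. -/
def pgapp {M N : Preglid FR Λ} (f : M ⟶ N) (X : OFF FR Λ) :
    M.obj.obj.obj X ⟶ N.obj.obj.obj X :=
  mapp f.hom X

/-- The component at `X` of a morphism of prefragments. -/
def pfapp {M N : Prefrag FR Λ} (f : M ⟶ N) (X : FF FR Λ) :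
    M.obj.obj.obj X ⟶ N.obj.obj.obj X :=
  mapp f.hom X

/-- The class `Σ` of morphisms of pregliders all of whose components at objects of `Λ`
are isomorphisms. -/
def SigmaClass : MorphismProperty (Preglid FR Λ) :=
  fun _ _ f => ∀ α : Λ, IsIso (pgapp FR Λ f (.of α))

/-- The category of glider representations: the localization of `Preglid FR Λ` at `Σ`. -/
abbrev Glid : Type (u + 1) := (SigmaClass FR Λ).Localization

/-- The localization functor `Q : Preglid FR Λ ⥤ Glid FR Λ`. -/
def QF : Preglid FR Λ ⥤ Glid FR Λ := (SigmaClass FR Λ).Q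

/-- The restriction functor `j^* : Mod (oFF_Λ R) ⥤ Mod (FF_Λ R)`. -/
def jStar : Mod (OFF FR Λ) ⥤ Mod (FF FR Λ) where
  obj M := ⟨jF FR Λ ⋙ M.obj, by haveI : M.obj.Additive := M.property; exact (inferInstance : (jF FR Λ ⋙ M.obj).Additive)⟩
  map {M N} f := ObjectProperty.homMk (Functor.whiskerLeft (jF FR Λ) f.hom)
  map_id _ := rfl
  map_comp _ _ := rfl

theorem isPrefragment_jStar (M : Mod (OFF FR Λ)) (hM : IsPreglider FR Λ M) :
    IsPrefragment FR Λ ((jStar FR Λ).obj M) :=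
  fun α β h => hM (.of α) (.of β) h

/-- The restriction functor `j^* : Preglid FR Λ ⥤ Prefrag FR Λ`. -/
def jRes : Preglid FR Λ ⥤ Prefrag FR Λ where
  obj M := ⟨(jStar FR Λ).obj M.obj, isPrefragment_jStar FR Λ M.obj M.property⟩
  map f := ObjectProperty.homMk ((jStar FR Λ).map f.hom)
  map_id M := by ext1; exact ((jStar FR Λ).map_id M.obj)
  map_comp f g := by ext1; exact ((jStar FR Λ).map_comp f.hom g.hom)

theorem sigma_isInvertedBy : (SigmaClass FR Λ).IsInvertedBy (jRes FR Λ) := by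
  intro M N f hf
  haveI : (AdditiveFunctor.forget (FF FR Λ) AddCommGrpCat.{u}).Faithful :=
    ObjectProperty.faithful_ι _
  haveI : ∀ X : FF FR Λ, IsIso
      (((ObjectProperty.ι (fun M : Mod (FF FR Λ) => IsPrefragment FR Λ M) ⋙
        AdditiveFunctor.forget _ _).map ((jRes FR Λ).map f)).app X) := by
    rintro ⟨α⟩
    exact hf α
  haveI : IsIso ((ObjectProperty.ι (fun M : Mod (FF FR Λ) => IsPrefragment FR Λ M) ⋙
      AdditiveFunctor.forget _ _).map ((jRes FR Λ).map f)) :=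
    NatIso.isIso_of_isIso_app _
  exact isIso_of_reflects_iso ((jRes FR Λ).map f)
    (ObjectProperty.ι (fun M : Mod (FF FR Λ) => IsPrefragment FR Λ M) ⋙
      AdditiveFunctor.forget _ _)

/-- The canonical fully faithful functor `φ : Glid FR Λ ⥤ Prefrag FR Λ`,
the unique functor with `Q ⋙ φ = j^*`. -/
def phiF : Glid FR Λ ⥤ Prefrag FR Λ :=
  Localization.Construction.lift (jRes FR Λ) (sigma_isInvertedBy FR Λ)

theorem phiF_fac : QF FR Λ ⋙ phiF FR Λ = jRes FR Λ :=
  Localization.Construction.fac _ _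

section AddSubfunctor

variable {C : Type u} [Category.{u} C]

structure AddSubfunctor (A : C ⥤ AddCommGrpCat.{u}) where
  obj : ∀ X, AddSubgroup (A.obj X)
  map_mem : ∀ {X Y : C} (g : X ⟶ Y) {x : A.obj X}, x ∈ obj X → A.map g x ∈ obj Y

namespace AddSubfunctor

variable {A : C ⥤ AddCommGrpCat.{u}} (S : AddSubfunctor A)

def toFunctor : C ⥤ AddCommGrpCat.{u} where
  obj X := .of (S.obj X)
  map {X Y} g := AddCommGrpCat.ofHom <|
    ((A.map g).hom.comp (S.obj X).subtype).codRestrict (S.obj Y) fun x => S.map_mem g x.2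
  map_id X := by ext x; simp
  map_comp f g := by ext x; simp

def ι : S.toFunctor ⟶ A where
  app X := AddCommGrpCat.ofHom (S.obj X).subtype

theorem toFunctor_map_injective {X Y : C} {g : X ⟶ Y} (hg : Function.Injective (A.map g)) :
    Function.Injective (S.toFunctor.map g) :=
  fun _ _ h => Subtype.ext (hg (congrArg Subtype.val h))

instance [Preadditive C] [A.Additive] : S.toFunctor.Additive where
  map_add {X Y f g} := by
    ext x
    exact Subtype.ext (congrArg (fun h : A.obj X ⟶ A.obj Y => h x.1) A.map_add)

def ker {B : C ⥤ AddCommGrpCat.{u}} (τ : A ⟶ B) : AddSubfunctor A where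
  obj X := (τ.app X).hom.ker
  map_mem g x hx := by
    simp only [AddMonoidHom.mem_ker] at hx ⊢
    rw [← ConcreteCategory.comp_apply, τ.naturality, ConcreteCategory.comp_apply, hx, map_zero]

theorem ker_ι_comp {B : C ⥤ AddCommGrpCat.{u}} (τ : A ⟶ B) : (ker τ).ι ≫ τ = 0 := by
  ext X x
  exact x.2

def isoOfRange {D : Type u} [Category.{u} D] (J : D ⥤ C) {N : D ⥤ AddCommGrpCat.{u}}
    (τ : N ⟶ J ⋙ A) (hτ : ∀ X, Function.Injective (τ.app X))
    (hS : ∀ X, S.obj (J.obj X) = (τ.app X).hom.range) :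
    N ≅ J ⋙ S.toFunctor :=
  NatIso.ofComponents
    (fun X => ((AddMonoidHom.ofInjective (hτ X)).trans
      (AddEquiv.addSubgroupCongr (hS X).symm)).toAddCommGrpIso)
    fun g => by
      ext x
      exact Subtype.ext (congrArg (fun h => h x) (τ.naturality g))

end AddSubfunctor

end AddSubfunctor

theorem isPrefragment_addSubfunctor {A : Prefrag FR Λ} (S : AddSubfunctor A.obj.obj) :
    IsPrefragment FR Λ (AdditiveFunctor.of S.toFunctor) :=
  fun α β h => S.toFunctor_map_injective (A.property α β h)

theorem Prefrag.injective_app_of_mono {A B : Prefrag FR Λ} (f : A ⟶ B) [Mono f] (X : FF FR Λ) :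
    Function.Injective (f.hom.hom.app X) := by
  let K : Prefrag FR Λ := ⟨_, isPrefragment_addSubfunctor FR Λ (AddSubfunctor.ker f.hom.hom)⟩
  let ι : K ⟶ A := ObjectProperty.homMk (ObjectProperty.homMk (AddSubfunctor.ker f.hom.hom).ι)
  have hι : ι = 0 := (cancel_mono f).mp <| by
    rw [zero_comp]
    exact ObjectProperty.hom_ext _ (ObjectProperty.hom_ext _ (AddSubfunctor.ker_ι_comp _))
  refine (injective_iff_map_eq_zero _).mpr fun x hx => ?_
  exact congrArg (fun g : K ⟶ A => g.hom.hom.app X ⟨x, hx⟩) hι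

theorem isPreglider_addSubfunctor {A : Preglid FR Λ} (S : AddSubfunctor A.obj.obj) :
    IsPreglider FR Λ (AdditiveFunctor.of S.toFunctor) :=
  fun X Y h => S.toFunctor_map_injective (A.property X Y h)

def rangeExtension (A : Mod (OFF FR Λ)) {N : FF FR Λ ⥤ AddCommGrpCat.{u}}
    (τ : N ⟶ jF FR Λ ⋙ A.obj) : AddSubfunctor A.obj where
  obj
    | .of α => (τ.app (.of α)).hom.range
    | .infty => ⊤
  map_mem {X Y} g x hx := by
    cases Y with
    | infty => trivial
    | of β =>
      cases X with
      | of α =>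
        obtain ⟨y, rfl⟩ := hx
        let g' : FF.of α ⟶ FF.of β := g
        exact ⟨N.map g' y, congrArg (fun h => h y) (τ.naturality g')⟩
      | infty =>
        rw [show g = 0 from Subtype.ext (AddSubgroup.mem_bot.mp g.2), Functor.map_zero]
        exact zero_mem _

section Statements

variable {Γ : Type u} [Group Γ] [PartialOrder Γ]
  [CovariantClass Γ Γ (· * ·) (· ≤ ·)] [CovariantClass Γ Γ (Function.swap (· * ·)) (· ≤ ·)]
  {R : Type u} [Ring R]

/-- The essential image of `φ : Glid FR ⥤ Prefrag FR` is closed under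
subobjects: if `M` is an object of `Glid FR` and `f : N ⟶ φ(M)` is a monomorphism in
`Prefrag FR`, then `N` lies in the essential image of `φ`. -/
theorem statement_14 (FR : RingFiltration Γ R) (Λ : Set Γ)
    (M : Glid FR Λ) (N : Prefrag FR Λ) (f : N ⟶ (phiF FR Λ).obj M) (hf : Mono f) :
    (phiF FR Λ).essImage N := by
  -- `M` is `Q M₀` for the preglider `M₀ := M.as.obj`, and `φ (Q E)` is `j^* E` by definition.
  let S := rangeExtension FR Λ M.as.obj.obj f.hom.hom
  refine ⟨(QF FR Λ).obj ⟨_, isPreglider_addSubfunctor FR Λ S⟩, ⟨?_⟩⟩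
  exact ObjectProperty.isoMk _ (ObjectProperty.isoMk _
    (S.isoOfRange (jF FR Λ) f.hom.hom (Prefrag.injective_app_of_mono FR Λ f)
      (by rintro ⟨α⟩; rfl))).symm

end Statements

end GliderPaper
end
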